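/- arXiv:1604.04806 — 2 statements merged into one kernel-verified Lean document; each statement's English description precedes it below -/
import Mathlib

section
/- At a negative interior minimum the nonlocal operator is strictly negative: Let Ω ⊂ ℝⁿ be open and bounded, α ∈ (0,2), G differentiable with G(0)=0 and G' ≥ c₀ > 0, and u : ℝⁿ → ℝ measurable with u ∈ L_α. Suppose x⁰ ∈ Ω satisfies u(x⁰) = min over the closure of Ω of u, u(x⁰) < 0, u ≥ 0 on ℝⁿ \ Ω, and u is not a.e. equal to the constant u(x⁰). Then the (absolutely convergent on {u(x⁰) < u(z)} and nonpositive-integrand) integral ∫_{ℝⁿ} G(u(x⁰) - u(z)) / |x⁰ - z|^{n+α} dz is strictly negative. -/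
open MeasureTheory Metric Set

/-!
Every value of `u` is at least `u x0`: on `closure Ω` by minimality, and off `Ω` because there
`u ≥ 0 > u x0`. As `G` is strictly increasing with `G 0 = 0`, the integrand is nonpositive, and it
vanishes only where `u z = u x0`. Since `u` is not a.e. equal to `u x0`, the integral of this
nonpositive function is strictly negative.
-/

theorem le_of_le_on_closure_of_nonneg_off {X : Type*} [TopologicalSpace X] {Ω : Set X}
    {u : X → ℝ} {x0 : X} (hmin : ∀ z ∈ closure Ω, u x0 ≤ u z) (hx0 : u x0 ≤ 0)
    (hout : ∀ z ∉ Ω, 0 ≤ u z) (z : X) : u x0 ≤ u z := by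
  by_cases hz : z ∈ Ω
  · exact hmin z (subset_closure hz)
  · exact hx0.trans (hout z hz)

theorem integral_neg_of_nonpos_of_not_ae_eq_zero {α : Type*} [MeasurableSpace α]
    {μ : Measure α} {f : α → ℝ} (hf : f ≤ 0) (hfi : Integrable f μ) (hne : ¬ f =ᵐ[μ] 0) :
    ∫ x, f x ∂μ < 0 := by
  refine (integral_nonpos hf).lt_of_ne fun h => hne ?_
  have hneg_zero : -f =ᵐ[μ] 0 :=
    (integral_eq_zero_iff_of_nonneg (fun x => neg_nonneg.2 (hf x)) hfi.neg).1
      (by rw [integral_neg, h, neg_zero])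
  simpa using hneg_zero.neg

theorem eq_of_apply_sub_div_rpow_norm_sub_eq_zero {E : Type*} [NormedAddCommGroup E]
    {G : ℝ → ℝ} (hG : Function.Injective G) (hG0 : G 0 = 0) {u : E → ℝ} {x z : E} {s : ℝ}
    (h : G (u x - u z) / ‖x - z‖ ^ s = 0) : u z = u x := by
  by_cases hxz : x = z
  · rw [hxz]
  have hden : 0 < ‖x - z‖ ^ s := Real.rpow_pos_of_pos (norm_pos_iff.2 (sub_ne_zero.2 hxz)) s
  have hG_eq : G (u x - u z) = G 0 := by
    rw [hG0]; exact (div_eq_zero_iff.1 h).resolve_right hden.ne'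
  linarith [hG hG_eq]

theorem stmt8_general {n : ℕ} (α : ℝ)
    (Ω : Set (EuclideanSpace ℝ (Fin n)))
    (G : ℝ → ℝ) (c₀ : ℝ) (hc₀ : 0 < c₀) (hG0 : G 0 = 0)
    (hG' : ∀ t, c₀ ≤ deriv G t)
    (u : EuclideanSpace ℝ (Fin n) → ℝ)
    (x0 : EuclideanSpace ℝ (Fin n))
    (hmin : ∀ z ∈ closure Ω, u x0 ≤ u z) (hneg : u x0 < 0)
    (hu_out : ∀ z ∉ Ω, 0 ≤ u z)
    (hnotconst : ¬ (∀ᵐ z ∂volume, u z = u x0))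
    -- the integral is absolutely convergent
    (hint : Integrable (fun z => G (u x0 - u z) / ‖x0 - z‖ ^ ((n : ℝ) + α)) volume) :
    (∫ z, G (u x0 - u z) / ‖x0 - z‖ ^ ((n : ℝ) + α)) < 0 := by
  have hG_mono : StrictMono G := strictMono_of_deriv_pos fun t => hc₀.trans_le (hG' t)
  have hle := le_of_le_on_closure_of_nonneg_off hmin hneg.le hu_out
  have hf_nonpos : ∀ z, G (u x0 - u z) / ‖x0 - z‖ ^ ((n : ℝ) + α) ≤ 0 := fun z =>
    div_nonpos_of_nonpos_of_nonneg (hG0 ▸ hG_mono.monotone (sub_nonpos.2 (hle z)))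
      (Real.rpow_nonneg (norm_nonneg _) _)
  refine integral_neg_of_nonpos_of_not_ae_eq_zero hf_nonpos hint fun h => hnotconst ?_
  filter_upwards [h] with z hz
  exact eq_of_apply_sub_div_rpow_norm_sub_eq_zero hG_mono.injective hG0 hz

theorem stmt8 {n : ℕ} [NeZero n] (α : ℝ) (hα : α ∈ Ioo (0 : ℝ) 2)
    (Ω : Set (EuclideanSpace ℝ (Fin n))) (hΩo : IsOpen Ω) (hΩb : Bornology.IsBounded Ω)
    (G : ℝ → ℝ) (c₀ : ℝ) (hc₀ : 0 < c₀) (hGdiff : Differentiable ℝ G) (hG0 : G 0 = 0)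
    (hG' : ∀ t, c₀ ≤ deriv G t)
    (u : EuclideanSpace ℝ (Fin n) → ℝ) (hu_meas : Measurable u)
    -- u ∈ L_α
    (hu_loc : LocallyIntegrable u volume)
    (hu_Lα : Integrable (fun x => |u x| / (1 + ‖x‖ ^ ((n : ℝ) + α))) volume)
    (x0 : EuclideanSpace ℝ (Fin n)) (hx0 : x0 ∈ Ω)
    (hmin : ∀ z ∈ closure Ω, u x0 ≤ u z) (hneg : u x0 < 0)
    (hu_out : ∀ z ∉ Ω, 0 ≤ u z)
    (hnotconst : ¬ (∀ᵐ z ∂volume, u z = u x0))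
    -- the integral is absolutely convergent
    (hint : Integrable (fun z => G (u x0 - u z) / ‖x0 - z‖ ^ ((n : ℝ) + α)) volume) :
    (∫ z, G (u x0 - u z) / ‖x0 - z‖ ^ ((n : ℝ) + α)) < 0 :=
  stmt8_general α Ω G c₀ hc₀ hG0 hG' u x0 hmin hneg hu_out hnotconst hint
end

section
/- Key inequality at a negative minimum of the antisymmetric function: Let λ ∈ ℝ, Σ = {x : x₁ < λ}, and w : ℝⁿ → ℝ with w(x^λ) = -w(x). Let G be C¹ with G'(t) ≥ c₀ > 0. Suppose x ∈ Σ is such that w(x) = min_Σ w < 0. Write Σ₋ = {y ∈ Σ : w(x) + w(y) ≤ 0} and Σ₊ = {y ∈ Σ : w(x) + w(y) > 0}, and for real numbers a ≥ b, G(a) - G(b) ≥ c₀(a - b). Then with u_λ(y) = u(y^λ) and w = u_λ - u one has the pointwise bounds: on Σ₋, [G(u_λ(x)-u_λ(y)) - G(u(x)-u(y))]/|x-y|^{n+α} + [G(u_λ(x)-u(y)) - G(u(x)-u_λ(y))]/|x-y^λ|^{n+α} ≤ 2c₀ w(x)/|x-y^λ|^{n+α}. -/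
/-! The two kernel differences are controlled by the one-sided Lipschitz bound on `G`:
with `w = u_λ - u`, the first is at most `c₀ (w x - w y) ≤ 0` (minimality of `w x`) and the
second at most `c₀ (w x + w y)` (on `Σ₋`). Since `|x - y| ≤ |x - y^λ|` for `x, y ∈ Σ`, the
nonpositive first term can only grow when its kernel is replaced by `|x - y^λ|^{-(n+α)}`, and
the two bounds then add up to `2 c₀ w x`. -/

noncomputable section

/-- Reflection of `x` across the hyperplane `{x₁ = λ}` in `ℝⁿ`. -/
def reflHyp {n : ℕ} [NeZero n] (l : ℝ) (x : EuclideanSpace ℝ (Fin n)) :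
    EuclideanSpace ℝ (Fin n) :=
  WithLp.toLp 2 (Function.update x 0 (2 * l - x 0))

section Reflection

variable {n : ℕ} [NeZero n] (l : ℝ)

lemma reflHyp_apply_zero (x : EuclideanSpace ℝ (Fin n)) : reflHyp l x 0 = 2 * l - x 0 := by
  simp [reflHyp]

lemma reflHyp_apply_of_ne_zero (x : EuclideanSpace ℝ (Fin n)) {i : Fin n} (hi : i ≠ 0) :
    reflHyp l x i = x i := by
  simp [reflHyp, Function.update_of_ne hi]

lemma norm_sub_le_norm_sub_reflHyp {x y : EuclideanSpace ℝ (Fin n)} (hx : x 0 ≤ l)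
    (hy : y 0 ≤ l) : ‖x - y‖ ≤ ‖x - reflHyp l y‖ := by
  rw [EuclideanSpace.norm_eq, EuclideanSpace.norm_eq]
  gcongr with i
  by_cases hi : i = 0
  · subst hi
    rw [PiLp.sub_apply, PiLp.sub_apply, reflHyp_apply_zero, Real.norm_eq_abs,
      Real.norm_eq_abs, ← sq_le_sq]
    -- `(x₀ - 2l + y₀)² - (x₀ - y₀)² = 4 (l - x₀) (l - y₀)`
    nlinarith [mul_nonneg (sub_nonneg.mpr hx) (sub_nonneg.mpr hy)]
  · rw [PiLp.sub_apply, PiLp.sub_apply, reflHyp_apply_of_ne_zero l y hi]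

end Reflection

theorem stmt9_general {n : ℕ} [NeZero n] (l α : ℝ) (hα : 0 < α)
    (G : ℝ → ℝ) (c₀ : ℝ) (hc₀ : 0 < c₀)
    (hG : ∀ a b : ℝ, b ≤ a → c₀ * (a - b) ≤ G a - G b)
    (u : EuclideanSpace ℝ (Fin n) → ℝ)
    (w : EuclideanSpace ℝ (Fin n) → ℝ)
    (hw : ∀ y, w y = u (reflHyp l y) - u y)
    (x : EuclideanSpace ℝ (Fin n)) (hx : x 0 < l)
    (hxmin : ∀ y : EuclideanSpace ℝ (Fin n), y 0 < l → w x ≤ w y)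
    (y : EuclideanSpace ℝ (Fin n)) (hy : y 0 < l) (hyx : y ≠ x)
    (hySm : w x + w y ≤ 0) :
    (G (u (reflHyp l x) - u (reflHyp l y)) - G (u x - u y)) / ‖x - y‖ ^ ((n : ℝ) + α) +
        (G (u (reflHyp l x) - u y) - G (u x - u (reflHyp l y))) /
          ‖x - reflHyp l y‖ ^ ((n : ℝ) + α) ≤
      2 * c₀ * w x / ‖x - reflHyp l y‖ ^ ((n : ℝ) + α) := by
  set A := G (u (reflHyp l x) - u (reflHyp l y)) - G (u x - u y)
  set B := G (u (reflHyp l x) - u y) - G (u x - u (reflHyp l y))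
  set near := ‖x - y‖ ^ ((n : ℝ) + α)
  set far := ‖x - reflHyp l y‖ ^ ((n : ℝ) + α)
  have hwx := hw x
  have hwy := hw y
  have hmin : w x ≤ w y := hxmin y hy
  have hA : A ≤ c₀ * (w x - w y) := by
    rw [hwx, hwy]
    linarith [hG (u x - u y) (u (reflHyp l x) - u (reflHyp l y)) (by linarith)]
  have hB : B ≤ c₀ * (w x + w y) := by
    rw [hwx, hwy]
    linarith [hG (u x - u (reflHyp l y)) (u (reflHyp l x) - u y) (by linarith)]
  have hA_nonpos : A ≤ 0 :=
    hA.trans (mul_nonpos_of_nonneg_of_nonpos hc₀.le (by linarith))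
  have hnear_pos : 0 < near :=
    Real.rpow_pos_of_pos (norm_pos_iff.mpr (sub_ne_zero.mpr hyx.symm)) _
  have hnear_le_far : near ≤ far :=
    Real.rpow_le_rpow (norm_nonneg _) (norm_sub_le_norm_sub_reflHyp l hx.le hy.le) (by positivity)
  calc A / near + B / far ≤ A / far + B / far := by
        gcongr ?_ + _
        rw [div_eq_mul_inv, div_eq_mul_inv]
        exact mul_le_mul_of_nonpos_left (inv_anti₀ hnear_pos hnear_le_far) hA_nonpos
    _ = (A + B) / far := (add_div A B far).symm
    _ ≤ 2 * c₀ * w x / far := by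
        gcongr
        linarith

theorem stmt9 {n : ℕ} [NeZero n] (l α : ℝ) (hα : 0 < α)
    (G : ℝ → ℝ) (c₀ : ℝ) (hc₀ : 0 < c₀)
    (hG : ∀ a b : ℝ, b ≤ a → c₀ * (a - b) ≤ G a - G b)
    (u : EuclideanSpace ℝ (Fin n) → ℝ)
    (w : EuclideanSpace ℝ (Fin n) → ℝ)
    (hw : ∀ y, w y = u (reflHyp l y) - u y)
    (x : EuclideanSpace ℝ (Fin n)) (hx : x 0 < l)
    (hxneg : w x < 0) (hxmin : ∀ y : EuclideanSpace ℝ (Fin n), y 0 < l → w x ≤ w y)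
    (y : EuclideanSpace ℝ (Fin n)) (hy : y 0 < l) (hyx : y ≠ x)
    (hySm : w x + w y ≤ 0) :
    (G (u (reflHyp l x) - u (reflHyp l y)) - G (u x - u y)) / ‖x - y‖ ^ ((n : ℝ) + α) +
        (G (u (reflHyp l x) - u y) - G (u x - u (reflHyp l y))) /
          ‖x - reflHyp l y‖ ^ ((n : ℝ) + α) ≤
      2 * c₀ * w x / ‖x - reflHyp l y‖ ^ ((n : ℝ) + α) :=
  stmt9_general l α hα G c₀ hc₀ hG u w hw x hx hxmin y hy hyx hySm
end
end
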